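/- Let d ≥ 1, n ≥ 1, k ≥ 1, let V be a finite-dimensional complex inner product space, and let Φ_{A,a} (A ∈ Fin k, a ∈ Fin d) be vectors in V satisfying the MUB Gram condition ⟨Φ_{A,a}, Φ_{A',a'}⟩ = δ_{A,A'}δ_{a,a'} + (1−δ_{A,A'})/d; set Φ = (1/√d)·Σ_{a} Φ_{0,a}. Suppose e ∈ V and t : Fin k → Fin d satisfy ⟨Φ_{A,a}, e⟩ = (1/√(n·d))·δ_{a, t(A)} for all A ∈ Fin k and a ∈ Fin d. Then the orthogonal projection of e onto span{Φ_{A,a} : A ∈ Fin k, a ∈ Fin d} equals (1/√n)·[ (1/√d)·Σ_{A=0}^{k−1} Φ_{A, t(A)} − ((k−1)/d)·Φ ]. -/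

import Mathlib

/-! The candidate vector lies in the span, so it is the projection of `e` as soon as it has the
same inner products as `e` with every `Φ A a`. Against `Φ A a`, the selection `Σ_B Φ B (t B)` has
overlap `δ_{a,t(A)}` from its own basis plus `1/d` from each of the `k - 1` others, while every full
basis sum `Σ_b Φ B b` has overlap exactly `1`; subtracting `(k-1)/d · Φ₀` thus leaves
`δ_{a,t(A)}/√d`. -/

open scoped InnerProductSpace

namespace Submodule

variable {𝕜 E : Type*} [RCLike 𝕜] [NormedAddCommGroup E] [InnerProductSpace 𝕜 E]

theorem mem_orthogonal_span_iff {s : Set E} {x : E} :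
    x ∈ (span 𝕜 s)ᗮ ↔ ∀ u ∈ s, ⟪u, x⟫_𝕜 = 0 := by
  rw [← span_singleton_le_iff_mem, ← isOrtho_iff_le, isOrtho_comm, isOrtho_span]
  simp

theorem starProjection_span_eq_of_inner_eq {s : Set E} [(span 𝕜 s).HasOrthogonalProjection]
    {e v : E} (hv : v ∈ span 𝕜 s) (h : ∀ u ∈ s, ⟪u, v⟫_𝕜 = ⟪u, e⟫_𝕜) :
    (span 𝕜 s).starProjection e = v :=
  eq_starProjection_of_mem_orthogonal hv <| mem_orthogonal_span_iff.2 fun u hu => by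
    rw [inner_sub_right, h u hu, sub_self]

end Submodule

section MUB

variable {V ι : Type*} [NormedAddCommGroup V] [DecidableEq ι] {d : ℕ}

def IsMUBGram (𝕜 : Type*) [RCLike 𝕜] [InnerProductSpace 𝕜 V] (Φ : ι → Fin d → V) : Prop :=
  ∀ A A' a a', ⟪Φ A a, Φ A' a'⟫_𝕜 = if A = A' then (if a = a' then 1 else 0) else 1 / (d : 𝕜)

namespace IsMUBGram

variable {𝕜 : Type*} [RCLike 𝕜] [InnerProductSpace 𝕜 V] {Φ : ι → Fin d → V}

theorem inner_sum_basis (hΦ : IsMUBGram 𝕜 Φ) (A B : ι) (a : Fin d) :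
    ⟪Φ A a, ∑ b, Φ B b⟫_𝕜 = 1 := by
  have hd : (d : 𝕜) ≠ 0 := Nat.cast_ne_zero.2 a.pos.ne'
  by_cases hAB : A = B
  · subst hAB
    simp [inner_sum, hΦ A A a]
  · simp [inner_sum, hΦ A B a, hAB, hd]

variable [Fintype ι]

theorem inner_sum_selection (hΦ : IsMUBGram 𝕜 Φ) (t : ι → Fin d) (A : ι) (a : Fin d) :
    ⟪Φ A a, ∑ B, Φ B (t B)⟫_𝕜 = (if t A = a then 1 else 0) + ((Fintype.card ι : 𝕜) - 1) / d := by
  have hoff : ∀ B ∈ ({A}ᶜ : Finset ι), ⟪Φ A a, Φ B (t B)⟫_𝕜 = 1 / d := fun B hB => by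
    rw [hΦ, if_neg (by simpa [eq_comm] using hB)]
  rw [inner_sum, Fintype.sum_eq_add_sum_compl A, Finset.sum_congr rfl hoff, hΦ, if_pos rfl,
    Finset.sum_const, Finset.card_compl, Finset.card_singleton, nsmul_eq_mul,
    Nat.cast_sub (Fintype.card_pos_iff.2 ⟨A⟩)]
  simp only [@eq_comm _ a (t A), Nat.cast_one]
  ring

theorem inner_selection_sub_basis (hΦ : IsMUBGram 𝕜 Φ) (t : ι → Fin d) (B₀ A : ι) (a : Fin d)
    (c : 𝕜) :
    ⟪Φ A a, c • ∑ B, Φ B (t B) - ((Fintype.card ι - 1) / d : 𝕜) • c • ∑ b, Φ B₀ b⟫_𝕜 =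
      if t A = a then c else 0 := by
  rw [inner_sub_right, inner_smul_right, inner_smul_right, inner_smul_right,
    hΦ.inner_sum_selection, hΦ.inner_sum_basis]
  split_ifs <;> ring

end IsMUBGram

end MUB

theorem projection_formula_for_alice_basis_general
    (d n k : ℕ) (hk : 1 ≤ k)
    (V : Type*) [NormedAddCommGroup V] [InnerProductSpace ℂ V]
    [FiniteDimensional ℂ V]
    (Φ : Fin k → Fin d → V)
    (hGram : ∀ (A A' : Fin k) (a a' : Fin d),
      ⟪Φ A a, Φ A' a'⟫_ℂ =
        if A = A' then (if a = a' then 1 else 0) else 1 / (d : ℂ))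
    (Φ₀ : V) (hΦ₀ : Φ₀ = (1 / Real.sqrt d : ℂ) • ∑ a : Fin d, Φ ⟨0, hk⟩ a)
    (e : V) (t : Fin k → Fin d)
    (he : ∀ (A : Fin k) (a : Fin d),
      ⟪Φ A a, e⟫_ℂ = if t A = a then (1 / Real.sqrt (n * d) : ℂ) else 0) :
    (Submodule.orthogonalProjection
        (Submodule.span ℂ (Set.range (fun p : Fin k × Fin d => Φ p.1 p.2))) e : V) =
      (1 / Real.sqrt n : ℂ) •
        ((1 / Real.sqrt d : ℂ) • (∑ A : Fin k, Φ A (t A)) -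
          (((k : ℂ) - 1) / (d : ℂ)) • Φ₀) := by
  subst hΦ₀
  set K := Submodule.span ℂ (Set.range fun p : Fin k × Fin d => Φ p.1 p.2)
  have hmem : ∀ A a, Φ A a ∈ K := fun A a => Submodule.subset_span ⟨(A, a), rfl⟩
  refine Submodule.starProjection_span_eq_of_inner_eq ?_ ?_
  · exact K.smul_mem _ (K.sub_mem (K.smul_mem _ (K.sum_mem fun A _ => hmem A (t A)))
      (K.smul_mem _ (K.smul_mem _ (K.sum_mem fun a _ => hmem _ a))))
  · rintro _ ⟨⟨A, a⟩, rfl⟩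
    have hinner := IsMUBGram.inner_selection_sub_basis hGram t ⟨0, hk⟩ A a (1 / Real.sqrt d)
    rw [Fintype.card_fin] at hinner
    rw [inner_smul_right, hinner, he, Real.sqrt_mul (Nat.cast_nonneg n)]
    split_ifs <;> push_cast <;> ring

/-- **Explicit formula for Alice's basis vectors (Eq. (9) of the paper).**
If `⟪Φ_{A,a}, e⟫ = δ_{a,t(A)}/√(nd)` for all `A, a`, then the orthogonal projection
of `e` onto `span{Φ_{A,a}}` equals
`(1/√n)·[(1/√d)·Σ_A Φ_{A,t(A)} − ((k−1)/d)·Φ]`. -/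
theorem projection_formula_for_alice_basis
    (d n k : ℕ) (hd : 1 ≤ d) (hn : 1 ≤ n) (hk : 1 ≤ k)
    (V : Type*) [NormedAddCommGroup V] [InnerProductSpace ℂ V]
    [FiniteDimensional ℂ V]
    (Φ : Fin k → Fin d → V)
    (hGram : ∀ (A A' : Fin k) (a a' : Fin d),
      ⟪Φ A a, Φ A' a'⟫_ℂ =
        if A = A' then (if a = a' then 1 else 0) else 1 / (d : ℂ))
    (Φ₀ : V) (hΦ₀ : Φ₀ = (1 / Real.sqrt d : ℂ) • ∑ a : Fin d, Φ ⟨0, hk⟩ a)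
    (e : V) (t : Fin k → Fin d)
    (he : ∀ (A : Fin k) (a : Fin d),
      ⟪Φ A a, e⟫_ℂ = if t A = a then (1 / Real.sqrt (n * d) : ℂ) else 0) :
    (Submodule.orthogonalProjection
        (Submodule.span ℂ (Set.range (fun p : Fin k × Fin d => Φ p.1 p.2))) e : V) =
      (1 / Real.sqrt n : ℂ) •
        ((1 / Real.sqrt d : ℂ) • (∑ A : Fin k, Φ A (t A)) -
          (((k : ℂ) - 1) / (d : ℂ)) • Φ₀) :=
  projection_formula_for_alice_basis_general d n k hk V Φ hGram Φ₀ hΦ₀ e t he
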